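/- For μ > 0, set λ(μ) = (√(μ⁴+μ) − μ²)/(2μ). Then λ(μ) > 0, and the improper integral ∫₀^∞ dμ / (√(agm(√λ(μ), √(λ(μ)+μ))) · √(μ⁴+μ)) converges. -/

import Mathlib

open Filter Set MeasureTheory

/-- The AGM iteration: `agmSeq a b n` is the pair `(aₙ, bₙ)`. -/
noncomputable def agmSeq (a b : ℝ) : ℕ → ℝ × ℝ
  | 0 => (a, b)
  | n + 1 => (((agmSeq a b n).1 + (agmSeq a b n).2) / 2,
      Real.sqrt ((agmSeq a b n).1 * (agmSeq a b n).2))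

/-- The arithmetic–geometric mean of `a` and `b`. -/
noncomputable def agm (a b : ℝ) : ℝ := limUnder atTop (fun n => (agmSeq a b n).1)

noncomputable def lam (μ : ℝ) : ℝ := (Real.sqrt (μ ^ 4 + μ) - μ ^ 2) / (2 * μ)

/-!
Since `λ (λ + μ) = 1 / (4μ)`, the AM–GM bound `√(ab) ≤ agm a b` gives
`agm (√λ) (√(λ + μ)) ≥ (4μ)^(-1/4)`. Hence the integrand is at most `2 μ^(-1/2)` on `(0, 1]` and
at most `2 μ^(-3/2)` on `(1, ∞)`, both integrable there. Measurability holds because the AGM is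
the pointwise limit of the (measurable) iterates.
-/

open scoped NNReal Topology

section AGM

/-- Mathlib's `NNReal.agmSequences` lists (geometric, arithmetic) means and starts one step later. -/
lemma agmSeq_succ_eq_agmSequences (x y : ℝ≥0) (n : ℕ) :
    agmSeq x y (n + 1) =
      (((NNReal.agmSequences x y n).2 : ℝ), ((NNReal.agmSequences x y n).1 : ℝ)) := by
  induction n with
  | zero => simp [agmSeq, Real.coe_sqrt]
  | succ n ih =>
    rw [agmSeq.eq_2, ih, NNReal.agmSequences_succ']
    simp [Real.coe_sqrt, add_comm, mul_comm]

lemma tendsto_agmSeq_fst_nnrealAgm (x y : ℝ≥0) :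
    Tendsto (fun n => (agmSeq x y n).1) atTop (𝓝 (NNReal.agm x y : ℝ)) := by
  rw [← tendsto_add_atTop_iff_nat 1]
  simp only [agmSeq_succ_eq_agmSequences]
  exact NNReal.tendsto_coe.mpr NNReal.tendsto_agmSequences_snd_agm

lemma agm_coe (x y : ℝ≥0) : agm x y = NNReal.agm x y :=
  (tendsto_agmSeq_fst_nnrealAgm x y).limUnder_eq

lemma tendsto_agmSeq_fst {a b : ℝ} (ha : 0 ≤ a) (hb : 0 ≤ b) :
    Tendsto (fun n => (agmSeq a b n).1) atTop (𝓝 (agm a b)) := by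
  lift a to ℝ≥0 using ha
  lift b to ℝ≥0 using hb
  rw [agm_coe]
  exact tendsto_agmSeq_fst_nnrealAgm a b

lemma sqrt_mul_le_agm {a b : ℝ} (ha : 0 ≤ a) (hb : 0 ≤ b) : Real.sqrt (a * b) ≤ agm a b := by
  lift a to ℝ≥0 using ha
  lift b to ℝ≥0 using hb
  rw [agm_coe, ← NNReal.coe_mul, ← Real.coe_sqrt, NNReal.coe_le_coe]
  exact NNReal.agmSequences_fst_le_agm 0

lemma measurable_agm {α : Type*} [MeasurableSpace α] {f g : α → ℝ} (hf : Measurable f)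
    (hg : Measurable g) (hf₀ : ∀ x, 0 ≤ f x) (hg₀ : ∀ x, 0 ≤ g x) :
    Measurable fun x => agm (f x) (g x) := by
  have hmeas : ∀ n, Measurable fun x => agmSeq (f x) (g x) n := by
    intro n
    induction n with
    | zero => exact hf.prodMk hg
    | succ n ih => exact ((ih.fst.add ih.snd).div_const 2).prodMk (ih.fst.mul ih.snd).sqrt
  exact measurable_of_tendsto_metrizable (fun n => (hmeas n).fst)
    (tendsto_pi_nhds.mpr fun x => tendsto_agmSeq_fst (hf₀ x) (hg₀ x))

end AGM

section Lam

variable {μ : ℝ}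

lemma lam_pos (hμ : 0 < μ) : 0 < lam μ := by
  have : μ ^ 2 < Real.sqrt (μ ^ 4 + μ) :=
    Real.lt_sqrt_of_sq_lt (by nlinarith)
  unfold lam
  exact div_pos (by linarith) (by positivity)

lemma lam_mul_lam_add (hμ : 0 < μ) : lam μ * (lam μ + μ) = (4 * μ)⁻¹ := by
  have h : Real.sqrt (μ ^ 4 + μ) ^ 2 = μ ^ 4 + μ := Real.sq_sqrt (by positivity)
  unfold lam
  generalize Real.sqrt (μ ^ 4 + μ) = s at h ⊢
  field_simp
  linear_combination 4 * h

lemma measurable_lam : Measurable lam := by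
  unfold lam
  fun_prop

lemma inv_le_sqrt_agm_pow_eight (hμ : 0 < μ) :
    (4 * μ)⁻¹ ≤ Real.sqrt (agm (Real.sqrt (lam μ)) (Real.sqrt (lam μ + μ))) ^ 8 := by
  have hlam := lam_pos hμ
  have hagm := sqrt_mul_le_agm (Real.sqrt_nonneg (lam μ)) (Real.sqrt_nonneg (lam μ + μ))
  rw [← Real.sqrt_mul hlam.le, lam_mul_lam_add hμ] at hagm
  have h4 := pow_le_pow_left₀ (by positivity) hagm 4
  rwa [show 4 = 2 * 2 by rfl, pow_mul, Real.sq_sqrt (by positivity), Real.sq_sqrt (by positivity),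
    ← Real.sq_sqrt (hagm.trans' (by positivity)), ← pow_mul] at h4

end Lam

section Bounds

variable {s μ : ℝ}

lemma one_div_mul_sqrt_le_of_le_one (hs : 0 ≤ s) (hμ : 0 < μ) (hμ₁ : μ ≤ 1)
    (hsμ : (4 * μ)⁻¹ ≤ s ^ 8) : 1 / (s * Real.sqrt (μ ^ 4 + μ)) ≤ 2 * μ ^ (-(1 / 2) : ℝ) := by
  have hs_ge : 1 / 2 ≤ s := by
    refine le_of_pow_le_pow_left₀ (n := 8) (by norm_num) hs (hsμ.trans' ?_)
    rw [le_inv_comm₀ (by norm_num) (by positivity)]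
    norm_num
    linarith
  have hroot : Real.sqrt μ ≤ Real.sqrt (μ ^ 4 + μ) :=
    Real.sqrt_le_sqrt (le_add_of_nonneg_left (by positivity))
  calc 1 / (s * Real.sqrt (μ ^ 4 + μ)) ≤ 1 / (1 / 2 * Real.sqrt μ) := by
        gcongr
    _ = 2 * μ ^ (-(1 / 2) : ℝ) := by
        rw [Real.rpow_neg hμ.le, ← Real.sqrt_eq_rpow]
        ring

lemma one_div_mul_sqrt_le_of_one_le (hs : 0 ≤ s) (hμ₁ : 1 ≤ μ)
    (hsμ : (4 * μ)⁻¹ ≤ s ^ 8) : 1 / (s * Real.sqrt (μ ^ 4 + μ)) ≤ 2 * μ ^ (-(3 / 2) : ℝ) := by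
  have hμ : 0 < μ := by linarith
  have hs_ge : 1 / (2 * Real.sqrt μ) ≤ s := by
    refine le_of_pow_le_pow_left₀ (n := 8) (by norm_num) hs (hsμ.trans' ?_)
    calc (1 / (2 * Real.sqrt μ)) ^ 8 = (256 * (Real.sqrt μ ^ 2) ^ 4)⁻¹ := by ring
      _ = (256 * μ ^ 4)⁻¹ := by rw [Real.sq_sqrt hμ.le]
      _ ≤ (4 * μ)⁻¹ := by
        gcongr
        · norm_num
        · exact le_self_pow₀ hμ₁ (by norm_num)
  have hsq : μ ^ 2 ≤ Real.sqrt (μ ^ 4 + μ) := Real.le_sqrt_of_sq_le (by nlinarith)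
  calc 1 / (s * Real.sqrt (μ ^ 4 + μ)) ≤ 1 / (1 / (2 * Real.sqrt μ) * μ ^ 2) := by
        gcongr
    _ = 2 * μ ^ (-(3 / 2) : ℝ) := by
        rw [show (-(3 / 2) : ℝ) = 1 / 2 - (2 : ℕ) by norm_num, Real.rpow_sub hμ, Real.rpow_natCast,
          ← Real.sqrt_eq_rpow]
        field_simp

end Bounds

lemma integrableOn_Ioi_of_le_rpow {f : ℝ → ℝ} {a b C : ℝ} (ha : -1 < a) (hb : b < -1)
    (hf : AEStronglyMeasurable f (volume.restrict (Ioi 0)))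
    (h₀ : ∀ x ∈ Ioc 0 1, ‖f x‖ ≤ C * x ^ a) (h₁ : ∀ x ∈ Ioi 1, ‖f x‖ ≤ C * x ^ b) :
    IntegrableOn f (Ioi 0) := by
  rw [← Ioc_union_Ioi_eq_Ioi zero_le_one]
  refine IntegrableOn.union ?_ ?_
  · have hg : IntegrableOn (fun x : ℝ => x ^ a) (Ioc 0 1) := by
      rw [← intervalIntegrable_iff_integrableOn_Ioc_of_le zero_le_one]
      exact intervalIntegral.intervalIntegrable_rpow' ha
    refine (hg.const_mul C).mono' (hf.mono_set Ioc_subset_Ioi_self) ?_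
    filter_upwards [ae_restrict_mem measurableSet_Ioc] using h₀
  · refine ((integrableOn_Ioi_rpow_of_lt hb one_pos).const_mul C).mono'
      (hf.mono_set (Ioi_subset_Ioi zero_le_one)) ?_
    filter_upwards [ae_restrict_mem measurableSet_Ioi] using h₁

theorem stmt18 :
    (∀ μ : ℝ, 0 < μ → 0 < lam μ) ∧
    IntegrableOn
      (fun μ : ℝ => 1 /
        (Real.sqrt (agm (Real.sqrt (lam μ)) (Real.sqrt (lam μ + μ))) *
          Real.sqrt (μ ^ 4 + μ)))
      (Ioi 0) volume := by
  refine ⟨fun μ => lam_pos, ?_⟩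
  have hagm : Measurable fun μ => agm (Real.sqrt (lam μ)) (Real.sqrt (lam μ + μ)) :=
    measurable_agm measurable_lam.sqrt (measurable_lam.add measurable_id).sqrt
      (fun _ => Real.sqrt_nonneg _) (fun _ => Real.sqrt_nonneg _)
  refine integrableOn_Ioi_of_le_rpow (C := 2) (show -1 < -(1 / 2 : ℝ) by norm_num)
    (show -(3 / 2 : ℝ) < -1 by norm_num) (Measurable.aestronglyMeasurable (by fun_prop)) ?_ ?_
  · rintro μ ⟨hμ, hμ₁⟩
    rw [Real.norm_of_nonneg (by positivity)]
    exact one_div_mul_sqrt_le_of_le_one (Real.sqrt_nonneg _) hμ hμ₁ (inv_le_sqrt_agm_pow_eight hμ)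
  · intro μ (hμ₁ : 1 < μ)
    rw [Real.norm_of_nonneg (by positivity)]
    exact one_div_mul_sqrt_le_of_one_le (Real.sqrt_nonneg _) hμ₁.le
      (inv_le_sqrt_agm_pow_eight (by linarith))
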